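/- Let f(k_1,...,k_d) be the coefficient of ∏_{i=1}^d t_i^{k_i} in ∏_{i=1}^d ( ∑_{j≠i} t_j )^{k_i}. Then the multivariate generating function ∑_{k_1,...,k_d ≥ 0} f(k_1,...,k_d) x_1^{k_1}...x_d^{k_d} equals 1 / (1 - ∑_{i=2}^d (i-1) e_i(x_1,...,x_d)), where e_i is the elementary symmetric polynomial of degree i. -/

import Mathlib

open MvPolynomial Finset

/-- `t̂_i = (∑_j t_j) - t_i`. -/
noncomputable def that (d : ℕ) (i : Fin d) : MvPolynomial (Fin d) ℤ :=
  (∑ j, X j) - X i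

/-- The polynomial `∏_i ∑_{k=0}^{m_i-1} t̂_i^k t_i^{m_i-1-k}`. -/
noncomputable def cPoly (d : ℕ) (m : Fin d → ℕ) : MvPolynomial (Fin d) ℤ :=
  ∏ i, ∑ k ∈ Finset.range (m i), (that d i) ^ k * (X i) ^ (m i - 1 - k)

/-- `c(m_1,…,m_d)`: the coefficient of `∏ t_i^{m_i-1}` in `cPoly`. -/
noncomputable def c (d : ℕ) (m : Fin d → ℕ) : ℤ :=
  MvPolynomial.coeff (Finsupp.equivFunOnFinite.symm fun i => m i - 1) (cPoly d m)

/-- The polynomial `∏_i (∑_{j≠i} t_j)^{k_i}`. -/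
noncomputable def fPoly (d : ℕ) (k : Fin d → ℕ) : MvPolynomial (Fin d) ℤ :=
  ∏ i, (∑ j ∈ Finset.univ.erase i, X j) ^ k i

/-- `f(k_1,…,k_d)`: the coefficient of `∏ t_i^{k_i}` in `fPoly`. -/
noncomputable def fC (d : ℕ) (k : Fin d → ℕ) : ℤ :=
  MvPolynomial.coeff (Finsupp.equivFunOnFinite.symm k) (fPoly d k)
/-- The generating function of `f` as a formal power series. -/
noncomputable def Fser (d : ℕ) : MvPowerSeries (Fin d) ℤ :=
  fun e => fC d (fun i => e i)

/-- The denominator `1 - ∑_{i=2}^d (i-1) e_i(x_1,…,x_d)` as a power series. -/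
noncomputable def Dden (d : ℕ) : MvPowerSeries (Fin d) ℤ :=
  ((1 - ∑ i ∈ Finset.Icc 2 d, ((i : ℤ) - 1) • MvPolynomial.esymm (Fin d) ℤ i :
     MvPolynomial (Fin d) ℤ) : MvPowerSeries (Fin d) ℤ)

/-!
Expanding the denominator over subsets gives `1 - ∑_{i ≥ 2} (i - 1) e_i = ∑_S (1 - |S|) x^S`, so
the claim is that `∑_{S ⊆ P} (1 - |S|) f(k - 1_S)` vanishes for `k ≠ 0`, where `P = supp k`.
With `σ = ∑ t_j` and `t̂_i = σ - t_i`, `f(k)` is the coefficient of `t^k` in `∏ t̂_i^{k_i}`, and the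
sum becomes the coefficient of `t^k` in
`(∑_{S ⊆ P} (1 - |S|) ∏_{i ∈ S} t_i ∏_{i ∈ P \ S} t̂_i) · ∏ t̂_i^{k_i - 1}`.
Since `t_i + t̂_i = σ`, the bracket is `(σ - ∑_{i ∈ P} t_i) σ^{|P| - 1} = (∑_{j ∉ P} t_j) σ^{|P|-1}`
and every monomial of it contains a variable `t_j` with `k_j = 0`.
-/

section SqfreeExp

variable {σ : Type*}

noncomputable def sqfreeExp (S : Finset σ) : σ →₀ ℕ := ∑ i ∈ S, Finsupp.single i 1

theorem sqfreeExp_apply [DecidableEq σ] (S : Finset σ) (i : σ) :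
    sqfreeExp S i = if i ∈ S then 1 else 0 := by
  simp [sqfreeExp, Finsupp.finsetSum_apply, Finsupp.single_apply]

theorem sqfreeExp_le_iff (S : Finset σ) (e : σ →₀ ℕ) : sqfreeExp S ≤ e ↔ S ⊆ e.support := by
  classical
  simp only [Finsupp.le_def, sqfreeExp_apply, subset_iff, Finsupp.mem_support_iff]
  refine ⟨fun h i hi => ?_, fun h i => ?_⟩
  · simpa [hi, Nat.one_le_iff_ne_zero] using h i
  · split_ifs with hi
    · exact Nat.one_le_iff_ne_zero.2 (h hi)
    · exact Nat.zero_le _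

theorem monomial_sqfreeExp {R : Type*} [CommSemiring R] (S : Finset σ) :
    monomial (sqfreeExp S) (1 : R) = ∏ i ∈ S, X i := by
  simp only [sqfreeExp, monomial_sum_one, X]

end SqfreeExp

theorem sum_powerset_card_nsmul_prod_mul_prod {ι R : Type*} [CommSemiring R] [DecidableEq ι]
    (s : Finset ι) (f g : ι → R) :
    ∑ t ∈ s.powerset, #t • ((∏ i ∈ t, f i) * ∏ i ∈ s \ t, g i)
      = ∑ j ∈ s, f j * ∏ i ∈ s.erase j, (f i + g i) := by
  induction s using Finset.induction_on with
  | empty => simp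
  | @insert a s ha ih =>
    rw [sum_powerset_insert ha, sum_insert ha, erase_insert ha]
    have hsub : ∀ t ∈ s.powerset, a ∉ t := fun t ht h => ha (mem_powerset.1 ht h)
    have without_a : ∑ t ∈ s.powerset, #t • ((∏ i ∈ t, f i) * ∏ i ∈ insert a s \ t, g i)
        = g a * ∑ t ∈ s.powerset, #t • ((∏ i ∈ t, f i) * ∏ i ∈ s \ t, g i) := by
      rw [mul_sum]
      refine sum_congr rfl fun t ht => ?_
      rw [insert_sdiff_of_notMem _ (hsub t ht),
        prod_insert fun h => ha (mem_sdiff.1 h).1, mul_smul_comm, mul_left_comm]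
    have with_a : ∑ t ∈ s.powerset,
          #(insert a t) • ((∏ i ∈ insert a t, f i) * ∏ i ∈ insert a s \ insert a t, g i)
        = f a * ∑ t ∈ s.powerset, #t • ((∏ i ∈ t, f i) * ∏ i ∈ s \ t, g i)
          + f a * ∏ i ∈ s, (f i + g i) := by
      rw [prod_add, mul_sum, mul_sum, ← sum_add_distrib]
      refine sum_congr rfl fun t ht => ?_
      rw [card_insert_of_notMem (hsub t ht), prod_insert (hsub t ht),
        insert_sdiff_insert, sdiff_insert_of_notMem ha, succ_nsmul,
        mul_smul_comm, mul_assoc]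
    have erase_a : ∑ j ∈ s, f j * ∏ i ∈ (insert a s).erase j, (f i + g i)
        = (f a + g a) * ∑ j ∈ s, f j * ∏ i ∈ s.erase j, (f i + g i) := by
      rw [mul_sum]
      refine sum_congr rfl fun j hj => ?_
      rw [erase_insert_of_ne (ne_of_mem_of_not_mem hj ha).symm,
        prod_insert fun h => ha (mem_of_mem_erase h), mul_left_comm]
    rw [without_a, with_a, erase_a, ih]
    ring

theorem sum_powerset_one_sub_card_smul_prod_mul_prod {ι R : Type*} [CommRing R] [DecidableEq ι]
    {P : Finset ι} (hP : P.Nonempty) {x y : ι → R} {s : R} (hxy : ∀ i, x i + y i = s) :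
    ∑ t ∈ P.powerset, (1 - #t : ℤ) • ((∏ i ∈ t, x i) * ∏ i ∈ P \ t, y i)
      = (s - ∑ i ∈ P, x i) * s ^ (#P - 1) := by
  have hcard : s ^ #P = s * s ^ (#P - 1) := by
    rw [← pow_succ', Nat.sub_add_cancel hP.card_pos]
  simp only [sub_smul, one_smul, natCast_zsmul, sum_sub_distrib, ← prod_add,
    sum_powerset_card_nsmul_prod_mul_prod, hxy]
  rw [prod_const, hcard, sub_mul, sum_mul]
  congr 1
  refine sum_congr rfl fun j hj => ?_
  rw [prod_const, card_erase_of_mem hj]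

theorem prod_pow_tsub_sqfreeExp {σ M : Type*} [Fintype σ] [DecidableEq σ] [CommMonoid M]
    (a : σ → M) (e : σ →₀ ℕ) (S : Finset σ) :
    ∏ i, a i ^ (e - sqfreeExp S) i = (∏ i ∈ e.support \ S, a i) * ∏ i, a i ^ (e i - 1) := by
  -- `e i - 1` truncates to `0` off the support
  have hexp : ∀ i, (e - sqfreeExp S) i = (if i ∈ e.support \ S then 1 else 0) + (e i - 1) := by
    intro i
    by_cases hi : i ∈ S
    · simp [sqfreeExp_apply, hi]
    · by_cases he : e i = 0 <;> simp [sqfreeExp_apply, hi, he]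
      omega
  simp only [hexp, pow_add, prod_mul_distrib, pow_ite, pow_one, pow_zero,
    prod_ite_mem, univ_inter]

theorem that_eq_sum_erase (d : ℕ) (i : Fin d) : that d i = ∑ j ∈ univ.erase i, X j := by
  rw [that, sum_erase_eq_sub (mem_univ i)]

theorem fC_eq_coeff_prod_that {d : ℕ} (e : Fin d →₀ ℕ) :
    fC d e = coeff e (∏ i, that d i ^ e i) := by
  simp only [fC, fPoly, that_eq_sum_erase, Finsupp.equivFunOnFinite_symm_coe]

theorem sum_powerset_support_one_sub_card_mul_fC {d : ℕ} {e : Fin d →₀ ℕ} (he : e ≠ 0) :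
    ∑ S ∈ e.support.powerset, (1 - #S : ℤ) * fC d ⇑(e - sqfreeExp S) = 0 := by
  set C := ∏ i, that d i ^ (e i - 1)
  have hterm : ∀ S ⊆ e.support, fC d ⇑(e - sqfreeExp S)
      = coeff e (((∏ i ∈ S, X i) * ∏ i ∈ e.support \ S, that d i) * C) := by
    intro S hS
    rw [fC_eq_coeff_prod_that, prod_pow_tsub_sqfreeExp, ← monomial_sqfreeExp, mul_assoc,
      coeff_monomial_mul', if_pos ((sqfreeExp_le_iff S e).2 hS), one_mul]
  have hsum : ∑ j, X j - ∑ j ∈ e.support, X j = ∑ j ∈ e.supportᶜ, (X j : MvPolynomial (Fin d) ℤ) :=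
    sub_eq_of_eq_add' (sum_add_sum_compl _ _).symm
  calc ∑ S ∈ e.support.powerset, (1 - #S : ℤ) * fC d ⇑(e - sqfreeExp S)
      = coeff e ((∑ S ∈ e.support.powerset,
          (1 - #S : ℤ) • ((∏ i ∈ S, X i) * ∏ i ∈ e.support \ S, that d i)) * C) := by
        simp only [sum_mul, coeff_sum, smul_mul_assoc, coeff_smul, smul_eq_mul]
        exact sum_congr rfl fun S hS => by rw [hterm S (mem_powerset.1 hS)]
    _ = ∑ j ∈ e.supportᶜ, coeff e (X j * ((∑ j, X j) ^ (#e.support - 1) * C)) := by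
        rw [sum_powerset_one_sub_card_smul_prod_mul_prod (Finsupp.support_nonempty_iff.2 he)
          (fun i => by rw [that]; ring), hsum, sum_mul, sum_mul, coeff_sum]
        simp only [mul_assoc]
    _ = 0 := sum_eq_zero fun j hj => by
        rw [coeff_X_mul', if_neg (mem_compl.1 hj)]

theorem one_sub_sum_Icc_smul_esymm (σ R : Type*) [Fintype σ] [CommRing R] :
    1 - ∑ i ∈ Icc 2 (Fintype.card σ), ((i : ℤ) - 1) • esymm σ R i
      = ∑ S : Finset σ, (1 - #S : ℤ) • ∏ i ∈ S, (X i : MvPolynomial σ R) := by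
  set n := Fintype.card σ
  have hsub : insert 0 (Icc 2 n) ⊆ range (n + 1) := by
    intro k hk
    simp only [mem_insert, mem_Icc, mem_range] at hk ⊢
    omega
  calc 1 - ∑ i ∈ Icc 2 n, ((i : ℤ) - 1) • esymm σ R i
      = ∑ k ∈ insert 0 (Icc 2 n), (1 - k : ℤ) • esymm σ R k := by
        rw [sum_insert (by simp), Nat.cast_zero, sub_zero, one_smul, esymm_zero,
          sub_eq_add_neg, ← sum_neg_distrib]
        simp only [← neg_smul, neg_sub]
    _ = ∑ k ∈ range (n + 1), (1 - k : ℤ) • esymm σ R k := by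
        refine sum_subset hsub fun k hk hk' => ?_
        obtain rfl : k = 1 := by
          simp only [mem_insert, mem_Icc, mem_range] at hk hk'
          omega
        simp
    _ = ∑ S : Finset σ, (1 - #S : ℤ) • ∏ i ∈ S, (X i : MvPolynomial σ R) := by
        rw [← powerset_univ, sum_powerset, card_univ]
        refine sum_congr rfl fun k _ => ?_
        rw [esymm, smul_sum]
        exact sum_congr rfl fun S hS => by rw [(mem_powersetCard.1 hS).2]

theorem MvPowerSeries.coeff_mul_prod_X {σ R : Type*} [CommSemiring R] [DecidableEq σ]
    (φ : MvPowerSeries σ R) (S : Finset σ) (e : σ →₀ ℕ) :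
    MvPowerSeries.coeff e (φ * ((∏ i ∈ S, MvPolynomial.X i : MvPolynomial σ R) : MvPowerSeries σ R))
      = if S ⊆ e.support then MvPowerSeries.coeff (e - sqfreeExp S) φ else 0 := by
  rw [← monomial_sqfreeExp, coe_monomial, MvPowerSeries.coeff_mul_monomial, mul_one]
  exact if_congr (sqfreeExp_le_iff S e) rfl rfl

theorem coeff_Fser {d : ℕ} (e : Fin d →₀ ℕ) : MvPowerSeries.coeff e (Fser d) = fC d e := rfl

theorem coeff_Fser_mul_Dden {d : ℕ} (e : Fin d →₀ ℕ) :
    MvPowerSeries.coeff e (Fser d * Dden d)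
      = ∑ S ∈ e.support.powerset, (1 - #S : ℤ) * fC d ⇑(e - sqfreeExp S) := by
  have hD := one_sub_sum_Icc_smul_esymm (Fin d) ℤ
  rw [Fintype.card_fin] at hD
  rw [Dden, hD, ← coeToMvPowerSeries.ringHom_apply, map_sum]
  simp only [map_zsmul, coeToMvPowerSeries.ringHom_apply, mul_sum, mul_smul_comm, map_sum,
    MvPowerSeries.coeff_mul_prod_X, smul_eq_mul, mul_ite, mul_zero, ← mem_powerset,
    sum_ite_mem, univ_inter, coeff_Fser]

/-- MacMahon Master Theorem for this matrix:
`∑ f(k) x^k = 1 / (1 - ∑_{i=2}^d (i-1) e_i(x))`, i.e. the generating function of `f`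
times the denominator equals `1`. -/
theorem gf_f_eq (d : ℕ) : Fser d * Dden d = 1 := by
  ext e
  rw [coeff_Fser_mul_Dden, MvPowerSeries.coeff_one]
  split_ifs with he
  · subst he
    rw [Finsupp.support_zero, powerset_empty, sum_singleton, fC_eq_coeff_prod_that]
    simp
  · exact sum_powerset_support_one_sub_card_mul_fC he
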